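/- arXiv:1810.01023 — 5 statements merged into one kernel-verified Lean document; each statement's English description precedes it below -/
import Mathlib

section
/- Let C be a category and consider a commutative square q ∘ π₁ = p ∘ π₂, where π₁ : P → X, π₂ : P → Y, q : X → B, p : Y → B, and assume the square is a pullback square. If π₁ is an isomorphism, π₂ is an epimorphism, and q is a regular epimorphism (i.e. q is a coequalizer of some pair of morphisms), then p is an isomorphism. -/
/-!
Since `π₁` is invertible, `t := inv π₁ ≫ π₂` satisfies `t ≫ p = q`, and uniqueness of lifts into
the pullback shows that `t` coequalizes every pair that `q` coequalizes. Hence `t` descends along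
the coequalizer `q` to some `s : B ⟶ Y` with `q ≫ s = t`. Then `s ≫ p = 𝟙 B` because `q` is epi,
and `p ≫ s = 𝟙 Y` because `π₂` is epi.
-/

open CategoryTheory

namespace CategoryTheory.IsPullback

variable {C : Type*} [Category C] {P X Y Z : C} {fst : P ⟶ X} {snd : P ⟶ Y} {f : X ⟶ Z}
  {g : Y ⟶ Z}

lemma inv_fst_comp_snd_comp (h : IsPullback fst snd f g) [IsIso fst] :
    inv fst ≫ snd ≫ g = f := by
  rw [← h.w, IsIso.inv_hom_id_assoc]

lemma comp_inv_fst_comp_snd_eq (h : IsPullback fst snd f g) [IsIso fst] {W : C}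
    {a b : W ⟶ X} (hab : a ≫ f = b ≫ f) : a ≫ inv fst ≫ snd = b ≫ inv fst ≫ snd := by
  have hcone : a ≫ f = (b ≫ inv fst ≫ snd) ≫ g := by
    rw [hab, Category.assoc, Category.assoc, h.inv_fst_comp_snd_comp]
  have hlift : h.lift a (b ≫ inv fst ≫ snd) hcone = a ≫ inv fst := by
    rw [← cancel_mono fst, h.lift_fst, Category.assoc, IsIso.inv_hom_id, Category.comp_id]
  rw [← h.lift_snd a _ hcone, hlift, Category.assoc]

end CategoryTheory.IsPullback

/-- In any category, given a pullback square `q ∘ π₁ = p ∘ π₂`, if `π₁` is an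
isomorphism, `π₂` is an epimorphism and `q` is a regular epimorphism (a
coequalizer of some pair of morphisms), then `p` is an isomorphism.
(Lemma 2.3 of the paper, for locales.) -/
theorem isIso_of_isPullback_of_isIso_fst {C : Type*} [Category C]
    {P X Y B : C} (π₁ : P ⟶ X) (π₂ : P ⟶ Y) (q : X ⟶ B) (p : Y ⟶ B)
    (hpb : IsPullback π₁ π₂ q p)
    (h₁ : IsIso π₁) (h₂ : Epi π₂) (h₃ : RegularEpi q) :
    IsIso p := by
  have : Epi q := h₃.epi
  let s : B ⟶ Y :=
    Limits.Cofork.IsColimit.desc h₃.isColimit (inv π₁ ≫ π₂) (hpb.comp_inv_fst_comp_snd_eq h₃.w)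
  have hqs : q ≫ s = inv π₁ ≫ π₂ := Limits.Cofork.IsColimit.π_desc h₃.isColimit
  refine ⟨s, ?_, ?_⟩
  · rw [← cancel_epi π₂, ← hpb.w_assoc, hqs, IsIso.hom_inv_id_assoc, Category.comp_id]
  · rw [← cancel_epi q, reassoc_of% hqs, hpb.inv_fst_comp_snd_comp, Category.comp_id]
end

section
/- Let A, B, C, D be frames and let f* : D → B, g* : C → A, h* : B → A, j* : D → C be frame homomorphisms (maps preserving arbitrary suprema and finite meets, including the top element) with g* ∘ j* = h* ∘ f*. Assume: f* has a left adjoint f_! : B → D satisfying the Frobenius condition f_!(b ∧ f*(d)) = f_!(b) ∧ d for all b ∈ B, d ∈ D; h* has a left adjoint h_! : A → B satisfying the Frobenius condition h_!(a ∧ h*(b)) = h_!(a) ∧ b for all a ∈ A, b ∈ B; g* has a left adjoint g_! : A → C; f and g are surjections in the sense that f_! ∘ f* = id_D and g_! ∘ g* = id_C; and the Beck–Chevalley condition j* ∘ f_! = g_! ∘ h* holds. Then the map j_! := f_! ∘ h_! ∘ g* : C → D is left adjoint to j* and satisfies the Frobenius condition j_!(c ∧ j*(d)) = j_!(c) ∧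 d for all c ∈ C, d ∈ D. -/
/-!
Composing the open maps `h` and `f` gives an open map `f ∘ h` with left adjoint `f_! ∘ h_!`
(adjunctions and the Frobenius law compose). Its inverse image `h* ∘ f*` equals `g* ∘ j*`,
and since `g_! ∘ g* = id` makes `g*` an order embedding preserving `⊓`, precomposing
`f_! ∘ h_!` with `g*` yields a left adjoint of `j*` that still satisfies Frobenius.
-/

section

variable {α β γ : Type*}

/-- For a frame homomorphism `u = f*` with left adjoint `l = f_!`, this is the condition
making the locale map `f` open. -/
def FrobeniusReciprocity [Min α] [Min β] (l : α → β) (u : β → α) : Prop :=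
  ∀ a b, l (a ⊓ u b) = l a ⊓ b

theorem FrobeniusReciprocity.comp [Min α] [Min β] [Min γ] {l₁ : α → β} {u₁ : β → α}
    {l₂ : β → γ} {u₂ : γ → β} (h₁ : FrobeniusReciprocity l₁ u₁)
    (h₂ : FrobeniusReciprocity l₂ u₂) : FrobeniusReciprocity (l₂ ∘ l₁) (u₁ ∘ u₂) :=
  fun a c => (congrArg l₂ (h₁ a (u₂ c))).trans (h₂ (l₁ a) c)

theorem FrobeniusReciprocity.of_comp_map_inf [Min α] [Min β] [Min γ] {l : α → β}
    {e : γ → α} {j : β → γ} (h : FrobeniusReciprocity l (e ∘ j))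
    (he : ∀ a b, e (a ⊓ b) = e a ⊓ e b) : FrobeniusReciprocity (l ∘ e) j :=
  fun c b => (congrArg l (he c (j b))).trans (h (e c) b)

theorem GaloisConnection.of_comp_orderEmbedding [Preorder α] [Preorder β] [Preorder γ]
    {l : α → β} {j : β → γ} (e : γ ↪o α) (gc : GaloisConnection l (e ∘ j)) :
    GaloisConnection (l ∘ e) j := fun c b => (gc (e c) b).trans e.le_iff_le

end

theorem open_of_pullback_of_open_surjections_general
    {A B C D : Type*} [Order.Frame A] [Order.Frame B] [Order.Frame C] [Order.Frame D]
    (fs : FrameHom D B) (gs : FrameHom C A) (hs : FrameHom B A) (js : FrameHom D C)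
    (hcomm : ∀ d : D, gs (js d) = hs (fs d))
    (fshr : B → D) (hf_adj : ∀ (b : B) (d : D), fshr b ≤ d ↔ b ≤ fs d)
    (hf_frob : ∀ (b : B) (d : D), fshr (b ⊓ fs d) = fshr b ⊓ d)
    (hshr : A → B) (hh_adj : ∀ (a : A) (b : B), hshr a ≤ b ↔ a ≤ hs b)
    (hh_frob : ∀ (a : A) (b : B), hshr (a ⊓ hs b) = hshr a ⊓ b)
    (gshr : A → C) (hg_adj : ∀ (a : A) (c : C), gshr a ≤ c ↔ a ≤ gs c)
    (hg_surj : ∀ c : C, gshr (gs c) = c) :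
    (∀ (c : C) (d : D), fshr (hshr (gs c)) ≤ d ↔ c ≤ js d) ∧
      (∀ (c : C) (d : D), fshr (hshr (gs (c ⊓ js d))) = fshr (hshr (gs c)) ⊓ d) := by
  have hsquare : ⇑gs ∘ ⇑js = ⇑hs ∘ ⇑fs := funext hcomm
  have hg_ins : GaloisInsertion gshr gs :=
    GaloisConnection.toGaloisInsertion hg_adj fun c => (hg_surj c).ge
  have hgs : ∀ a b, gs a ≤ gs b ↔ a ≤ b := fun _ _ => hg_ins.u_le_u_iff
  have hfh_adj : GaloisConnection (fshr ∘ hshr) (⇑gs ∘ ⇑js) :=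
    hsquare ▸ GaloisConnection.compose hh_adj hf_adj
  have hfh_frob : FrobeniusReciprocity (fshr ∘ hshr) (⇑gs ∘ ⇑js) :=
    hsquare ▸ FrobeniusReciprocity.comp hh_frob hf_frob
  exact ⟨hfh_adj.of_comp_orderEmbedding (OrderEmbedding.ofMapLEIff gs hgs),
    hfh_frob.of_comp_map_inf (map_inf gs)⟩

/-- Lemma 2.2 of the paper, at the level of frames. Given frame homomorphisms
`f* : D → B`, `g* : C → A`, `h* : B → A`, `j* : D → C` with
`g* ∘ j* = h* ∘ f*`, where `f*` and `h*` have left adjoints satisfying the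
Frobenius condition, `g*` has a left adjoint, `f` and `g` are surjections
(`f_! ∘ f* = id`, `g_! ∘ g* = id`), and the Beck–Chevalley condition
`j* ∘ f_! = g_! ∘ h*` holds, the map `j_! := f_! ∘ h_! ∘ g*` is left adjoint
to `j*` and satisfies the Frobenius condition; i.e. `j` is an open map. -/
theorem open_of_pullback_of_open_surjections
    {A B C D : Type*} [Order.Frame A] [Order.Frame B] [Order.Frame C] [Order.Frame D]
    (fs : FrameHom D B) (gs : FrameHom C A) (hs : FrameHom B A) (js : FrameHom D C)
    (hcomm : ∀ d : D, gs (js d) = hs (fs d))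
    (fshr : B → D) (hf_adj : ∀ (b : B) (d : D), fshr b ≤ d ↔ b ≤ fs d)
    (hf_frob : ∀ (b : B) (d : D), fshr (b ⊓ fs d) = fshr b ⊓ d)
    (hshr : A → B) (hh_adj : ∀ (a : A) (b : B), hshr a ≤ b ↔ a ≤ hs b)
    (hh_frob : ∀ (a : A) (b : B), hshr (a ⊓ hs b) = hshr a ⊓ b)
    (gshr : A → C) (hg_adj : ∀ (a : A) (c : C), gshr a ≤ c ↔ a ≤ gs c)
    (hf_surj : ∀ d : D, fshr (fs d) = d)
    (hg_surj : ∀ c : C, gshr (gs c) = c)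
    (hBC : ∀ b : B, js (fshr b) = gshr (hs b)) :
    (∀ (c : C) (d : D), fshr (hshr (gs c)) ≤ d ↔ c ≤ js d) ∧
      (∀ (c : C) (d : D), fshr (hshr (gs (c ⊓ js d))) = fshr (hshr (gs c)) ⊓ d) :=
  open_of_pullback_of_open_surjections_general fs gs hs js hcomm fshr hf_adj hf_frob hshr hh_adj
    hh_frob gshr hg_adj hg_surj
end

section
/- Let Q be a based groupoid quantale over a frame A, and let X be a stably supported Q-module. Then for every x ∈ X one has ς_X(x) = ς_Q(⟨x,x⟩) = ς_Q(⟨x,1_X⟩). -/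
/-- A based groupoid quantale over a frame `A`: a frame `Q` (with top `1_Q`)
equipped with a sup-preserving associative multiplication, an involution,
unital left/right `A`-actions and an equivariant support `ς_Q : Q → A`. -/
structure BasedGroupoidQuantale (A : Type*) (Q : Type*)
    [Order.Frame A] [Order.Frame Q] where
  mul : Q → Q → Q
  star : Q → Q
  lres : A → Q → Q          -- `a ▹ q`
  rres : Q → A → Q          -- `q ◃ a`
  suppQ : Q → A             -- `ς_Q`
  mul_assoc : ∀ p q r, mul (mul p q) r = mul p (mul q r)
  mul_sSup_left : ∀ (S : Set Q) (q : Q), mul (sSup S) q = ⨆ p ∈ S, mul p q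
  mul_sSup_right : ∀ (p : Q) (S : Set Q), mul p (sSup S) = ⨆ q ∈ S, mul p q
  star_star : ∀ q, star (star q) = q
  star_mul : ∀ p q, star (mul p q) = mul (star q) (star p)
  star_sSup : ∀ (S : Set Q), star (sSup S) = ⨆ q ∈ S, star q
  lres_top_act : ∀ q, lres ⊤ q = q
  rres_top_act : ∀ q, rres q ⊤ = q
  lres_sSup_left : ∀ (S : Set A) (q : Q), lres (sSup S) q = ⨆ a ∈ S, lres a q
  lres_sSup_right : ∀ (a : A) (S : Set Q), lres a (sSup S) = ⨆ q ∈ S, lres a q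
  rres_sSup_left : ∀ (S : Set Q) (a : A), rres (sSup S) a = ⨆ q ∈ S, rres q a
  rres_sSup_right : ∀ (q : Q) (S : Set A), rres q (sSup S) = ⨆ a ∈ S, rres q a
  lres_lres : ∀ a b q, lres a (lres b q) = lres (a ⊓ b) q
  lres_rres_comm : ∀ a q b, rres (lres a q) b = lres a (rres q b)
  lres_mul : ∀ a p q, mul (lres a p) q = lres a (mul p q)
  rres_mul : ∀ p a q, mul (rres p a) q = mul p (lres a q)
  mul_rres : ∀ p q a, rres (mul p q) a = mul p (rres q a)
  star_lres_rres : ∀ a q b, star (lres a (rres q b)) = lres b (rres (star q) a)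
  lres_inf : ∀ a q m, lres a q ⊓ m = lres a (q ⊓ m)
  inf_rres : ∀ m q a, m ⊓ rres q a = rres (q ⊓ m) a
  suppQ_sSup : ∀ (S : Set Q), suppQ (sSup S) = ⨆ q ∈ S, suppQ q
  suppQ_top : suppQ ⊤ = ⊤
  suppQ_le_mul : ∀ q p, lres (suppQ q) p ≤ mul (mul q (star q)) p
  suppQ_lres : ∀ q, lres (suppQ q) q = q
  suppQ_equivariant : ∀ a q, suppQ (lres a q) = a ⊓ suppQ q

/-- A pre-Hilbert `Q`-module: a frame `X` (with top `1_X`) with a sup-preserving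
`Q`-action and a unital left `A`-action, equipped with an inner product. -/
structure PreHilbertModule {A Q : Type*} [Order.Frame A] [Order.Frame Q]
    (GQ : BasedGroupoidQuantale A Q) (X : Type*) [Order.Frame X] where
  smul : Q → X → X          -- `q · x`
  lres : A → X → X          -- `a ▹ x`
  inner : X → X → Q         -- `⟨x, y⟩`
  smul_sSup_left : ∀ (S : Set Q) (x : X), smul (sSup S) x = ⨆ q ∈ S, smul q x
  smul_sSup_right : ∀ (q : Q) (S : Set X), smul q (sSup S) = ⨆ x ∈ S, smul q x
  mul_smul : ∀ p q x, smul (GQ.mul p q) x = smul p (smul q x)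
  lres_top_act : ∀ x, lres ⊤ x = x
  lres_sSup_left : ∀ (S : Set A) (x : X), lres (sSup S) x = ⨆ a ∈ S, lres a x
  lres_sSup_right : ∀ (a : A) (S : Set X), lres a (sSup S) = ⨆ x ∈ S, lres a x
  lres_lres : ∀ a b x, lres a (lres b x) = lres (a ⊓ b) x
  lresQ_smul : ∀ a q x, smul (GQ.lres a q) x = lres a (smul q x)
  rresQ_smul : ∀ q a x, smul (GQ.rres q a) x = smul q (lres a x)
  lres_inf : ∀ a (x y : X), lres a (x ⊓ y) = lres a x ⊓ y
  inner_smul : ∀ q x y, inner (smul q x) y = GQ.mul q (inner x y)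
  lres_inner : ∀ a x, GQ.lres a (inner x ⊤) = inner (lres a x) ⊤
  inner_sSup : ∀ (S : Set X) (y : X), inner (sSup S) y = ⨆ x ∈ S, inner x y
  inner_star : ∀ x y, inner x y = GQ.star (inner y x)

/-! The three inequalities behind the theorem: `x ≤ ς_X(x) ▹ 1_X ≤ ⟨x,x⟩ · 1_X`, so monotonicity
and stability of `ς_X` give `ς_X(x) ≤ ς_Q⟨x,x⟩`; `⟨x,x⟩ ≤ ⟨x,1_X⟩` gives
`ς_Q⟨x,x⟩ ≤ ς_Q⟨x,1_X⟩`; and `⟨x,1_X⟩ = ς_X(x) ▹ ⟨x,1_X⟩`, so equivariance of `ς_Q` gives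
`ς_Q⟨x,1_X⟩ ≤ ς_X(x)`. -/

theorem Monotone.of_map_sSup {α β : Type*} [CompleteLattice α] [CompleteLattice β] {f : α → β}
    (hf : ∀ S : Set α, f (sSup S) = ⨆ a ∈ S, f a) : Monotone f := by
  intro a b hab
  have hb := hf {a, b}
  rw [sSup_pair, sup_eq_right.mpr hab, iSup_pair] at hb
  exact hb ▸ le_sup_left

namespace BasedGroupoidQuantale

variable {A Q : Type*} [Order.Frame A] [Order.Frame Q] (GQ : BasedGroupoidQuantale A Q)

theorem suppQ_mono : Monotone GQ.suppQ :=
  Monotone.of_map_sSup GQ.suppQ_sSup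

theorem star_mono : Monotone GQ.star :=
  Monotone.of_map_sSup GQ.star_sSup

theorem suppQ_le_of_lres_eq {a : A} {q : Q} (h : GQ.lres a q = q) : GQ.suppQ q ≤ a := by
  rw [← h, GQ.suppQ_equivariant]
  exact inf_le_left

end BasedGroupoidQuantale

namespace PreHilbertModule

variable {A Q X : Type*} [Order.Frame A] [Order.Frame Q] [Order.Frame X]
  {GQ : BasedGroupoidQuantale A Q} (M : PreHilbertModule GQ X)

theorem lres_mono (a : A) : Monotone (M.lres a) :=
  Monotone.of_map_sSup (M.lres_sSup_right a)

theorem inner_mono_left (y : X) : Monotone (M.inner · y) :=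
  Monotone.of_map_sSup (M.inner_sSup · y)

theorem inner_mono_right (x : X) : Monotone (M.inner x) := by
  intro y z hyz
  rw [M.inner_star x y, M.inner_star x z]
  exact GQ.star_mono (M.inner_mono_left x hyz)

theorem suppQ_inner_self_le_suppQ_inner_top (x : X) :
    GQ.suppQ (M.inner x x) ≤ GQ.suppQ (M.inner x ⊤) :=
  GQ.suppQ_mono (M.inner_mono_right x le_top)

theorem lres_inner_top_of_lres_eq {a : A} {x : X} (h : M.lres a x = x) :
    GQ.lres a (M.inner x ⊤) = M.inner x ⊤ := by
  rw [M.lres_inner, h]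

theorem le_lres_top_of_lres_eq {a : A} {x : X} (h : M.lres a x = x) : x ≤ M.lres a ⊤ :=
  h ▸ M.lres_mono a le_top

end PreHilbertModule

theorem stably_supported_supp_eq_general {A Q X : Type*}
    [Order.Frame A] [Order.Frame Q] [Order.Frame X]
    (GQ : BasedGroupoidQuantale A Q) (M : PreHilbertModule GQ X)
    (ς : X → A) (hmono : Monotone ς)
    (hς_le : ∀ x, M.lres (ς x) ⊤ ≤ M.smul (M.inner x x) ⊤)
    (hς_restrict : ∀ x, M.lres (ς x) x = x)
    (hς_stable : ∀ (q : Q) (x : X), ς (M.smul q x) ≤ GQ.suppQ q) :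
    ∀ x : X, ς x = GQ.suppQ (M.inner x x) ∧ ς x = GQ.suppQ (M.inner x ⊤) := by
  intro x
  have h_self : ς x ≤ GQ.suppQ (M.inner x x) :=
    calc ς x ≤ ς (M.lres (ς x) ⊤) := hmono (M.le_lres_top_of_lres_eq (hς_restrict x))
      _ ≤ ς (M.smul (M.inner x x) ⊤) := hmono (hς_le x)
      _ ≤ GQ.suppQ (M.inner x x) := hς_stable _ _
  have h_mid := M.suppQ_inner_self_le_suppQ_inner_top x
  have h_top : GQ.suppQ (M.inner x ⊤) ≤ ς x :=
    GQ.suppQ_le_of_lres_eq (M.lres_inner_top_of_lres_eq (hς_restrict x))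
  exact ⟨le_antisymm h_self (h_mid.trans h_top), le_antisymm (h_self.trans h_mid) h_top⟩

/-- Theorem 4.1 (first assertion): for a stably supported `Q`-module `X`,
`ς_X(x) = ς_Q(⟨x,x⟩) = ς_Q(⟨x,1_X⟩)` for every `x ∈ X`. -/
theorem stably_supported_supp_eq {A Q X : Type*}
    [Order.Frame A] [Order.Frame Q] [Order.Frame X]
    (GQ : BasedGroupoidQuantale A Q) (M : PreHilbertModule GQ X)
    (hQ_stable : ∀ p q : Q, GQ.suppQ (GQ.mul p q) ≤ GQ.suppQ p)
    (ς : X → A) (hmono : Monotone ς) (hς_top : ς ⊤ = ⊤)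
    (hς_le : ∀ x, M.lres (ς x) ⊤ ≤ M.smul (M.inner x x) ⊤)
    (hς_restrict : ∀ x, M.lres (ς x) x = x)
    (hς_stable : ∀ (q : Q) (x : X), ς (M.smul q x) ≤ GQ.suppQ q) :
    ∀ x : X, ς x = GQ.suppQ (M.inner x x) ∧ ς x = GQ.suppQ (M.inner x ⊤) :=
  stably_supported_supp_eq_general GQ M ς hmono hς_le hς_restrict hς_stable
end

section
/- Let Q be a based groupoid quantale over a frame A, and let X be a pre-Hilbert Q-module. If ς and ς′ are two monotone maps X → A each making X a stably supported Q-module (i.e., each satisfies ς(1_X) = 1_A, ς(x)▹1_X ≤ ⟨x,x⟩·1_X, ς(x)▹x = x, and ς(q·x) ≤ ς_Q(q) for all q ∈ Q, x ∈ X, and likewise for ς′), then ς = ς′. In other words, a stable support on a pre-Hilbert Q-module is unique. -/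
/-! Every stable support is forced to be `x ↦ ς_Q ⟨x, 1_X⟩`. Restricting `x` to `ς x` and using
equivariance of `ς_Q` gives `ς_Q ⟨x, 1_X⟩ ≤ ς x`; conversely `x ≤ ς x ▹ 1_X ≤ ⟨x, x⟩ · 1_X`, so
monotonicity and stability give `ς x ≤ ς_Q ⟨x, x⟩ ≤ ς_Q ⟨x, 1_X⟩`. -/

theorem monotone_of_map_sSup {α β : Type*} [CompleteLattice α] [CompleteLattice β] {f : α → β}
    (h : ∀ S : Set α, f (sSup S) = ⨆ a ∈ S, f a) : Monotone f :=
  OrderHomClass.mono (sSupHom.mk f fun S => by rw [h, sSup_image])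

namespace PreHilbertModule

variable {A Q X : Type*} [Order.Frame A] [Order.Frame Q] [Order.Frame X]
  {GQ : BasedGroupoidQuantale A Q} (M : PreHilbertModule GQ X)

theorem suppQ_inner_top_le_of_lres_eq {a : A} {x : X} (h : M.lres a x = x) :
    GQ.suppQ (M.inner x ⊤) ≤ a := by
  rw [← h, ← M.lres_inner, GQ.suppQ_equivariant]
  exact inf_le_left

theorem le_smul_inner_self_top_of_lres_eq {a : A} {x : X} (h : M.lres a x = x)
    (ha : M.lres a ⊤ ≤ M.smul (M.inner x x) ⊤) : x ≤ M.smul (M.inner x x) ⊤ :=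
  calc x = M.lres a x := h.symm
    _ ≤ M.lres a ⊤ := M.lres_mono a le_top
    _ ≤ M.smul (M.inner x x) ⊤ := ha

theorem support_eq_suppQ_inner_top (ς : X → A) (hmono : Monotone ς)
    (hς_le : ∀ x, M.lres (ς x) ⊤ ≤ M.smul (M.inner x x) ⊤)
    (hς_restrict : ∀ x, M.lres (ς x) x = x)
    (hς_stable : ∀ (q : Q) (x : X), ς (M.smul q x) ≤ GQ.suppQ q) (x : X) :
    ς x = GQ.suppQ (M.inner x ⊤) := by
  refine le_antisymm ?_ (M.suppQ_inner_top_le_of_lres_eq (hς_restrict x))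
  calc ς x ≤ ς (M.smul (M.inner x x) ⊤) :=
        hmono (M.le_smul_inner_self_top_of_lres_eq (hς_restrict x) (hς_le x))
    _ ≤ GQ.suppQ (M.inner x x) := hς_stable _ _
    _ ≤ GQ.suppQ (M.inner x ⊤) := GQ.suppQ_mono (M.inner_mono_right x le_top)

end PreHilbertModule

theorem stable_support_unique_general {A Q X : Type*}
    [Order.Frame A] [Order.Frame Q] [Order.Frame X]
    (GQ : BasedGroupoidQuantale A Q) (M : PreHilbertModule GQ X)
    (ς ς' : X → A)
    (hmono : Monotone ς)
    (hς_le : ∀ x, M.lres (ς x) ⊤ ≤ M.smul (M.inner x x) ⊤)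
    (hς_restrict : ∀ x, M.lres (ς x) x = x)
    (hς_stable : ∀ (q : Q) (x : X), ς (M.smul q x) ≤ GQ.suppQ q)
    (hmono' : Monotone ς')
    (hς'_le : ∀ x, M.lres (ς' x) ⊤ ≤ M.smul (M.inner x x) ⊤)
    (hς'_restrict : ∀ x, M.lres (ς' x) x = x)
    (hς'_stable : ∀ (q : Q) (x : X), ς' (M.smul q x) ≤ GQ.suppQ q) :
    ς = ς' := by
  funext x
  rw [M.support_eq_suppQ_inner_top ς hmono hς_le hς_restrict hς_stable x,
    M.support_eq_suppQ_inner_top ς' hmono' hς'_le hς'_restrict hς'_stable x]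

/-- Lemma 4.3 (uniqueness): a stable support on a pre-Hilbert `Q`-module is
unique; the existence of a stable support is a property rather than extra
structure. -/
theorem stable_support_unique {A Q X : Type*}
    [Order.Frame A] [Order.Frame Q] [Order.Frame X]
    (GQ : BasedGroupoidQuantale A Q) (M : PreHilbertModule GQ X)
    (hQ_stable : ∀ p q : Q, GQ.suppQ (GQ.mul p q) ≤ GQ.suppQ p)
    (ς ς' : X → A)
    (hmono : Monotone ς) (hς_top : ς ⊤ = ⊤)
    (hς_le : ∀ x, M.lres (ς x) ⊤ ≤ M.smul (M.inner x x) ⊤)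
    (hς_restrict : ∀ x, M.lres (ς x) x = x)
    (hς_stable : ∀ (q : Q) (x : X), ς (M.smul q x) ≤ GQ.suppQ q)
    (hmono' : Monotone ς') (hς'_top : ς' ⊤ = ⊤)
    (hς'_le : ∀ x, M.lres (ς' x) ⊤ ≤ M.smul (M.inner x x) ⊤)
    (hς'_restrict : ∀ x, M.lres (ς' x) x = x)
    (hς'_stable : ∀ (q : Q) (x : X), ς' (M.smul q x) ≤ GQ.suppQ q) :
    ς = ς' :=
  stable_support_unique_general GQ M ς ς' hmono hς_le hς_restrict hς_stable hmono' hς'_le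
    hς'_restrict hς'_stable
end

section
/- Let Q be a based groupoid quantale over a frame A, and let X be a supported Q-module. Then the following three conditions are equivalent: (1) ς_X(q·x) = ς_Q(q◃ς_X(x)) for all q ∈ Q and x ∈ X; (2) ς_X(q·x) ≤ ς_Q(q) for all q ∈ Q and x ∈ X (i.e., the support ς_X is stable); (3) ς_X(q·1_X) ≤ ς_Q(q) for all q ∈ Q. -/
namespace BasedGroupoidQuantale

variable {A Q : Type*} [Order.Frame A] [Order.Frame Q] (GQ : BasedGroupoidQuantale A Q)

theorem mul_mono_right (p : Q) : Monotone (GQ.mul p) :=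
  monotone_of_map_sSup (GQ.mul_sSup_right p)

theorem lres_mono_right (a : A) : Monotone (GQ.lres a) :=
  monotone_of_map_sSup (GQ.lres_sSup_right a)

theorem rres_le (q : Q) (a : A) : GQ.rres q a ≤ q := by
  simpa only [GQ.rres_top_act] using monotone_of_map_sSup (GQ.rres_sSup_right q) le_top

theorem lres_suppQ_top (q : Q) : GQ.lres (GQ.suppQ q) ⊤ = GQ.mul q ⊤ := by
  apply le_antisymm
  · calc GQ.lres (GQ.suppQ q) ⊤ ≤ GQ.mul (GQ.mul q (GQ.star q)) ⊤ := GQ.suppQ_le_mul q ⊤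
      _ = GQ.mul q (GQ.mul (GQ.star q) ⊤) := GQ.mul_assoc _ _ _
      _ ≤ GQ.mul q ⊤ := GQ.mul_mono_right q le_top
  · calc GQ.mul q ⊤ = GQ.mul (GQ.lres (GQ.suppQ q) q) ⊤ := by rw [GQ.suppQ_lres]
      _ = GQ.lres (GQ.suppQ q) (GQ.mul q ⊤) := GQ.lres_mul _ _ _
      _ ≤ GQ.lres (GQ.suppQ q) ⊤ := GQ.lres_mono_right _ le_top

theorem suppQ_lres_top (a : A) : GQ.suppQ (GQ.lres a ⊤) = a := by
  rw [GQ.suppQ_equivariant, GQ.suppQ_top, inf_top_eq]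

theorem suppQ_mul_top (q : Q) : GQ.suppQ (GQ.mul q ⊤) = GQ.suppQ q := by
  rw [← lres_suppQ_top, suppQ_lres_top]

theorem suppQ_mul_le (p q : Q) : GQ.suppQ (GQ.mul p q) ≤ GQ.suppQ p := by
  rw [← GQ.suppQ_mul_top (GQ.mul p q), ← GQ.suppQ_mul_top p, GQ.mul_assoc]
  exact GQ.suppQ_mono (GQ.mul_mono_right p le_top)

theorem mul_top_eq_top_of_suppQ_eq_top {e : Q} (he : GQ.suppQ e = ⊤) : GQ.mul e ⊤ = ⊤ := by
  rw [← lres_suppQ_top, he, GQ.lres_top_act]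

theorem suppQ_mul_of_mul_top_eq_top {e : Q} (he : GQ.mul e ⊤ = ⊤) (p : Q) :
    GQ.suppQ (GQ.mul p e) = GQ.suppQ p := by
  rw [← GQ.suppQ_mul_top (GQ.mul p e), GQ.mul_assoc, he, suppQ_mul_top]

end BasedGroupoidQuantale

namespace PreHilbertModule

variable {A Q X : Type*} [Order.Frame A] [Order.Frame Q] [Order.Frame X]
  {GQ : BasedGroupoidQuantale A Q} (M : PreHilbertModule GQ X)

theorem smul_mono_right (q : Q) : Monotone (M.smul q) :=
  monotone_of_map_sSup (M.smul_sSup_right q)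

variable {M} {ς : X → A}

theorem smul_rres_eq_smul (hς_restrict : ∀ x, M.lres (ς x) x = x) (q : Q) (x : X) :
    M.smul (GQ.rres q (ς x)) x = M.smul q x := by
  rw [M.rresQ_smul, hς_restrict]

theorem suppQ_inner_top_le (hς_restrict : ∀ x, M.lres (ς x) x = x) (x : X) :
    GQ.suppQ (M.inner x ⊤) ≤ ς x := by
  have hfix : GQ.lres (ς x) (M.inner x ⊤) = M.inner x ⊤ := by
    rw [M.lres_inner, hς_restrict]
  rw [← hfix, GQ.suppQ_equivariant]
  exact inf_le_left

theorem smul_inner_top_top (hς_top : ς ⊤ = ⊤)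
    (hς_le : ∀ x, M.lres (ς x) ⊤ ≤ M.smul (M.inner x x) ⊤) :
    M.smul (M.inner ⊤ ⊤) ⊤ = ⊤ :=
  top_le_iff.mp (by simpa only [hς_top, M.lres_top_act] using hς_le ⊤)

theorem suppQ_rres_le (hς_le : ∀ x, M.lres (ς x) ⊤ ≤ M.smul (M.inner x x) ⊤)
    (hς_restrict : ∀ x, M.lres (ς x) x = x) (he : GQ.mul (M.inner ⊤ ⊤) ⊤ = ⊤)
    (q : Q) (x : X) : GQ.suppQ (GQ.rres q (ς x)) ≤ ς (M.smul q x) := by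
  set e := M.inner ⊤ ⊤
  have hX : M.smul (GQ.rres q (ς x)) ⊤ ≤ M.smul (GQ.mul q (M.inner x x)) ⊤ := by
    rw [M.rresQ_smul, M.mul_smul]
    exact M.smul_mono_right q (hς_le x)
  have hQ : GQ.mul (GQ.rres q (ς x)) e ≤ GQ.mul (GQ.mul q (M.inner x x)) e := by
    simpa only [M.inner_smul] using M.inner_mono_left ⊤ hX
  calc GQ.suppQ (GQ.rres q (ς x))
      = GQ.suppQ (GQ.mul (GQ.rres q (ς x)) e) := (GQ.suppQ_mul_of_mul_top_eq_top he _).symm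
    _ ≤ GQ.suppQ (GQ.mul (GQ.mul q (M.inner x x)) e) := GQ.suppQ_mono hQ
    _ ≤ GQ.suppQ (GQ.mul q (M.inner x x)) := GQ.suppQ_mul_le _ _
    _ ≤ GQ.suppQ (GQ.mul q (M.inner x ⊤)) :=
      GQ.suppQ_mono (GQ.mul_mono_right q (M.inner_mono_right x le_top))
    _ = GQ.suppQ (M.inner (M.smul q x) ⊤) := by rw [M.inner_smul]
    _ ≤ ς (M.smul q x) := suppQ_inner_top_le hς_restrict _

end PreHilbertModule

theorem supported_module_stability_tfae_general {A Q X : Type*}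
    [Order.Frame A] [Order.Frame Q] [Order.Frame X]
    (GQ : BasedGroupoidQuantale A Q) (M : PreHilbertModule GQ X)
    (ς : X → A) (hmono : Monotone ς) (hς_top : ς ⊤ = ⊤)
    (hς_le : ∀ x, M.lres (ς x) ⊤ ≤ M.smul (M.inner x x) ⊤)
    (hς_restrict : ∀ x, M.lres (ς x) x = x) :
    ((∀ (q : Q) (x : X), ς (M.smul q x) = GQ.suppQ (GQ.rres q (ς x))) ↔
        (∀ (q : Q) (x : X), ς (M.smul q x) ≤ GQ.suppQ q)) ∧
      ((∀ (q : Q) (x : X), ς (M.smul q x) ≤ GQ.suppQ q) ↔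
        (∀ q : Q, ς (M.smul q ⊤) ≤ GQ.suppQ q)) := by
  refine ⟨⟨fun h q x => ?_, fun h q x => ?_⟩, ⟨fun h q => h q ⊤, fun h q x => ?_⟩⟩
  · exact (h q x).trans_le (GQ.suppQ_mono (GQ.rres_le q (ς x)))
  · have he : GQ.suppQ (M.inner ⊤ ⊤) = ⊤ := by
      simpa only [PreHilbertModule.smul_inner_top_top hς_top hς_le, hς_top, top_le_iff]
        using h (M.inner ⊤ ⊤) ⊤
    apply le_antisymm
    · simpa only [PreHilbertModule.smul_rres_eq_smul hς_restrict] using h (GQ.rres q (ς x)) x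
    · exact PreHilbertModule.suppQ_rres_le hς_le hς_restrict
        (GQ.mul_top_eq_top_of_suppQ_eq_top he) q x
  · exact (hmono (M.smul_mono_right q le_top)).trans (h q)

/-- Lemma 4.5: for a supported `Q`-module `X`, the following are equivalent:
(1) `ς_X(q·x) = ς_Q(q◃ς_X(x))` for all `q, x`;
(2) `ς_X(q·x) ≤ ς_Q(q)` for all `q, x` (stability);
(3) `ς_X(q·1_X) ≤ ς_Q(q)` for all `q`. -/
theorem supported_module_stability_tfae {A Q X : Type*}
    [Order.Frame A] [Order.Frame Q] [Order.Frame X]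
    (GQ : BasedGroupoidQuantale A Q) (M : PreHilbertModule GQ X)
    (hQ_stable : ∀ p q : Q, GQ.suppQ (GQ.mul p q) ≤ GQ.suppQ p)
    (hQ_supp_mul_top : ∀ q : Q, GQ.suppQ (GQ.mul q ⊤) = GQ.suppQ q)
    (hQ_lres_top : ∀ q : Q, GQ.lres (GQ.suppQ q) ⊤ = GQ.mul q ⊤)
    (ς : X → A) (hmono : Monotone ς) (hς_top : ς ⊤ = ⊤)
    (hς_le : ∀ x, M.lres (ς x) ⊤ ≤ M.smul (M.inner x x) ⊤)
    (hς_restrict : ∀ x, M.lres (ς x) x = x) :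
    ((∀ (q : Q) (x : X), ς (M.smul q x) = GQ.suppQ (GQ.rres q (ς x))) ↔
        (∀ (q : Q) (x : X), ς (M.smul q x) ≤ GQ.suppQ q)) ∧
      ((∀ (q : Q) (x : X), ς (M.smul q x) ≤ GQ.suppQ q) ↔
        (∀ q : Q, ς (M.smul q ⊤) ≤ GQ.suppQ q)) :=
  supported_module_stability_tfae_general GQ M ς hmono hς_top hς_le hς_restrict
end
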